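/- arXiv:1510.02530 — 9 statements merged into one kernel-verified Lean document; each statement's English description precedes it below -/
import Mathlib

section
/- Under the stated hypotheses on (G, M, s, m̄), one has t(i(g)) = s(g) for every g ∈ G. -/
/-- The target map reconstructed from the source and the division map: `t g = s (m̄(g,g))`. -/
def tMap {G M : Type*} (s : G → M) (mbar : G → G → G) (g : G) : M := s (mbar g g)

/-- The inversion reconstructed from source, division and unit: `i g = m̄(u(s g), g)`. -/
def iMap {G M : Type*} (s : G → M) (mbar : G → G → G) (u : M → G) (g : G) : G :=
  mbar (u (s g)) g

/-- The multiplication reconstructed from the division map: `m(g,h) = m̄(g, i h)`. -/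
def mMap {G M : Type*} (s : G → M) (mbar : G → G → G) (u : M → G) (g h : G) : G :=
  mbar g (iMap s mbar u h)

/-- `t (i g) = s g` for every `g`. -/
theorem target_of_inverse_eq_source
    {G M : Type*} (s : G → M) (mbar : G → G → G) (u : M → G)
    (hs : Function.Surjective s)
    (hm : ∀ a : G, ∃ g h : G, s g = s h ∧ mbar g h = a)
    (ax1 : ∀ g h : G, s g = s h → s (mbar g h) = s (mbar h h))
    (ax2 : ∀ g h k : G, s g = s h → s h = s k → mbar (mbar g k) (mbar h k) = mbar g h)
    (ax3 : Set.InjOn s {a : G | ∃ g : G, a = mbar g g})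
    (huD : ∀ x : M, ∃ g : G, u x = mbar g g)
    (hus : ∀ x : M, s (u x) = x) :
    ∀ g : G, tMap s mbar (iMap s mbar u g) = s g := by
  intro g
  have hsa : s (u (s g)) = s g := hus (s g)
  have h1 : mbar (mbar (u (s g)) g) (mbar (u (s g)) g) = mbar (u (s g)) (u (s g)) :=
    ax2 _ _ _ rfl hsa
  obtain ⟨g0, hg0⟩ := huD (s g)
  have h2 : mbar (u (s g)) (u (s g)) = u (s g) := by
    rw [hg0]; exact ax2 g0 g0 g0 rfl rfl
  simp only [tMap, iMap, h1, h2, hsa]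
end

section
/- Under the stated hypotheses on (G, M, s, m̄), for all g, h ∈ G with s(g) = t(h) one has s(m(g,h)) = s(h) and t(m(g,h)) = t(g). -/
/-- for all `g h` with `s g = t h`, one has `s (m(g,h)) = s h` and `t (m(g,h)) = t g`. -/
theorem source_target_of_mul
    {G M : Type*} (s : G → M) (mbar : G → G → G) (u : M → G)
    (hs : Function.Surjective s)
    (hm : ∀ a : G, ∃ g h : G, s g = s h ∧ mbar g h = a)
    (ax1 : ∀ g h : G, s g = s h → s (mbar g h) = s (mbar h h))
    (ax2 : ∀ g h k : G, s g = s h → s h = s k → mbar (mbar g k) (mbar h k) = mbar g h)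
    (ax3 : Set.InjOn s {a : G | ∃ g : G, a = mbar g g})
    (huD : ∀ x : M, ∃ g : G, u x = mbar g g)
    (hus : ∀ x : M, s (u x) = x) :
    ∀ g h : G, s g = tMap s mbar h →
      s (mMap s mbar u g h) = s h ∧ tMap s mbar (mMap s mbar u g h) = tMap s mbar g := by

  intro g h hgh
  have hsi : ∀ k : G, s (iMap s mbar u k) = tMap s mbar k := by
    intro k
    have := ax1 (u (s k)) k (hus (s k))
    simpa [iMap, tMap] using this
  -- m̄(i k, i k) = u (s k)
  have hii : ∀ k : G, mbar (iMap s mbar u k) (iMap s mbar u k) = u (s k) := by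
    intro k
    obtain ⟨g0, hg0⟩ := huD (s k)
    have h1 : mbar (mbar (u (s k)) k) (mbar (u (s k)) k) = mbar (u (s k)) (u (s k)) :=
      ax2 (u (s k)) (u (s k)) k rfl (hus (s k))
    have h2 : mbar (mbar g0 g0) (mbar g0 g0) = mbar g0 g0 := ax2 g0 g0 g0 rfl rfl
    have h3 : mbar (u (s k)) (u (s k)) = u (s k) := by rw [hg0]; exact h2
    simpa [iMap, h3] using h1
  constructor
  · -- s (m g h) = s h
    have h1 : s (mbar g (iMap s mbar u h)) = s (mbar (iMap s mbar u h) (iMap s mbar u h)) :=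
      ax1 g (iMap s mbar u h) (by rw [hsi h]; exact hgh)
    rw [mMap, h1, hii h, hus]
  · -- t (m g h) = t g
    have h1 : mbar (mbar g (iMap s mbar u h)) (mbar g (iMap s mbar u h)) = mbar g g :=
      ax2 g g (iMap s mbar u h) rfl (by rw [hsi h]; exact hgh)
    simp [tMap, mMap, h1]
end

section
/- Under the stated hypotheses on (G, M, s, m̄), one has m(i(g), g) = u(s(g)) for every g ∈ G. -/
/-- `m(i g, g) = u (s g)` for every `g`. -/
theorem inverse_mul_self
    {G M : Type*} (s : G → M) (mbar : G → G → G) (u : M → G)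
    (hs : Function.Surjective s)
    (hm : ∀ a : G, ∃ g h : G, s g = s h ∧ mbar g h = a)
    (ax1 : ∀ g h : G, s g = s h → s (mbar g h) = s (mbar h h))
    (ax2 : ∀ g h k : G, s g = s h → s h = s k → mbar (mbar g k) (mbar h k) = mbar g h)
    (ax3 : Set.InjOn s {a : G | ∃ g : G, a = mbar g g})
    (huD : ∀ x : M, ∃ g : G, u x = mbar g g)
    (hus : ∀ x : M, s (u x) = x) :
    ∀ g : G, mMap s mbar u (iMap s mbar u g) g = u (s g) := by
  intro g
  set a := u (s g) with ha
  have hsa : s a = s g := hus (s g)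
  have h1 : mMap s mbar u (iMap s mbar u g) g = mbar (mbar a g) (mbar a g) := by
    simp [mMap, iMap, ha, ax1]
  rw [h1, ax2 a a g rfl hsa]
  obtain ⟨k, hk⟩ := huD (s g)
  rw [← ha] at hk
  rw [hk, ax2 k k k rfl rfl]
end

section
/- Under the stated hypotheses on (G, M, s, m̄), for all h, k ∈ G with s(h) = s(k) one has i(m̄(h,k)) = m̄(k,h); consequently i(i(g)) = g for every g ∈ G (so i is a bijection of G). -/
/-- `i(m̄(h,k)) = m̄(k,h)` whenever `s h = s k`; consequently `i (i g) = g`, so `i` is a bijection. -/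
theorem inverse_of_division_and_involutive
    {G M : Type*} (s : G → M) (mbar : G → G → G) (u : M → G)
    (hs : Function.Surjective s)
    (hm : ∀ a : G, ∃ g h : G, s g = s h ∧ mbar g h = a)
    (ax1 : ∀ g h : G, s g = s h → s (mbar g h) = s (mbar h h))
    (ax2 : ∀ g h k : G, s g = s h → s h = s k → mbar (mbar g k) (mbar h k) = mbar g h)
    (ax3 : Set.InjOn s {a : G | ∃ g : G, a = mbar g g})
    (huD : ∀ x : M, ∃ g : G, u x = mbar g g)
    (hus : ∀ x : M, s (u x) = x) :
    (∀ h k : G, s h = s k → iMap s mbar u (mbar h k) = mbar k h) ∧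
      (∀ g : G, iMap s mbar u (iMap s mbar u g) = g) ∧
      Function.Bijective (iMap s mbar u) := by
  have key : ∀ h k : G, s h = s k → iMap s mbar u (mbar h k) = mbar k h := by
    intro h k hsk
    have h1 : s (mbar h k) = s (mbar k k) := ax1 h k hsk
    have h2 : u (s (mbar k k)) = mbar k k :=
      ax3 (huD _) ⟨k, rfl⟩ (hus _)
    unfold iMap
    rw [h1, h2]
    exact ax2 k h k hsk.symm hsk
  have inv : ∀ g : G, iMap s mbar u (iMap s mbar u g) = g := by
    intro g
    obtain ⟨a, b, hab, rfl⟩ := hm g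
    rw [key a b hab, key b a hab.symm]
  exact ⟨key, inv, Function.Involutive.bijective inv⟩
end

section
/- Under the stated hypotheses on (G, M, s, m̄), one has m(g, i(g)) = u(t(g)) for every g ∈ G. -/
/-- `m(g, i g) = u (t g)` for every `g`. -/
theorem mul_inverse_self
    {G M : Type*} (s : G → M) (mbar : G → G → G) (u : M → G)
    (hs : Function.Surjective s)
    (hm : ∀ a : G, ∃ g h : G, s g = s h ∧ mbar g h = a)
    (ax1 : ∀ g h : G, s g = s h → s (mbar g h) = s (mbar h h))
    (ax2 : ∀ g h k : G, s g = s h → s h = s k → mbar (mbar g k) (mbar h k) = mbar g h)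
    (ax3 : Set.InjOn s {a : G | ∃ g : G, a = mbar g g})
    (huD : ∀ x : M, ∃ g : G, u x = mbar g g)
    (hus : ∀ x : M, s (u x) = x) :
    ∀ g : G, mMap s mbar u g (iMap s mbar u g) = u (tMap s mbar g) := by
  -- L0: u (s (mbar p p)) = mbar p p
  have L0 : ∀ p : G, u (s (mbar p p)) = mbar p p := by
    intro p
    apply ax3
    · exact huD _
    · exact ⟨p, rfl⟩
    · exact hus _
  -- L1: mbar g (u (s g)) = g
  have L1 : ∀ g : G, mbar g (u (s g)) = g := by
    intro g
    obtain ⟨p, q, hpq, rfl⟩ := hm g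
    have hsg : s (mbar p q) = s (mbar q q) := ax1 p q hpq
    rw [hsg, L0 q]
    exact ax2 p q q hpq rfl
  intro g
  have hsu : s (u (s g)) = s g := hus _
  -- i (i g) = g
  have hig : iMap s mbar u (iMap s mbar u g) = g := by
    unfold iMap
    have h1 : s (mbar (u (s g)) g) = s (mbar g g) := ax1 _ g hsu
    rw [h1, L0 g]
    calc mbar (mbar g g) (mbar (u (s g)) g)
        = mbar g (u (s g)) := ax2 g (u (s g)) g hsu.symm hsu
      _ = g := L1 g
  show mbar g (iMap s mbar u (iMap s mbar u g)) = u (tMap s mbar g)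
  rw [hig]
  exact (L0 g).symm
end

section
/- Under the stated hypotheses on (G, M, s, m̄), one has m(g, u(s(g))) = g and m(u(t(g)), g) = g for every g ∈ G (the unit laws). -/
/-- `m(g, u(s g)) = g` and `m(u(t g), g) = g` for every `g` (the unit laws). -/
theorem unit_laws
    {G M : Type*} (s : G → M) (mbar : G → G → G) (u : M → G)
    (hs : Function.Surjective s)
    (hm : ∀ a : G, ∃ g h : G, s g = s h ∧ mbar g h = a)
    (ax1 : ∀ g h : G, s g = s h → s (mbar g h) = s (mbar h h))
    (ax2 : ∀ g h k : G, s g = s h → s h = s k → mbar (mbar g k) (mbar h k) = mbar g h)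
    (ax3 : Set.InjOn s {a : G | ∃ g : G, a = mbar g g})
    (huD : ∀ x : M, ∃ g : G, u x = mbar g g)
    (hus : ∀ x : M, s (u x) = x) :
    ∀ g : G, mMap s mbar u g (u (s g)) = g ∧ mMap s mbar u (u (tMap s mbar g)) g = g := by
  -- key lemma: m̄(g, u(s g)) = g
  have key : ∀ g : G, mbar g (u (s g)) = g := by
    intro g
    obtain ⟨a, b, hab, hg⟩ := hm g
    obtain ⟨k, hk⟩ := huD (s g)
    -- m̄(b,b) and u(s g) are both in D and have the same image under s
    have hsbb : s (mbar b b) = s g := by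
      rw [← hg]; exact (ax1 a b hab).symm
    have heq : mbar b b = u (s g) := by
      apply ax3 ⟨b, rfl⟩ ⟨k, hk⟩
      rw [hsbb, hus]
    rw [← heq, ← hg]
    exact ax2 a b b hab rfl
  have idem : ∀ x : M, mbar (u x) (u x) = u x := by
    intro x
    obtain ⟨k, hk⟩ := huD x
    rw [hk]
    exact ax2 k k k rfl rfl
  intro g
  have hiu : iMap s mbar u (u (s g)) = u (s g) := by
    unfold iMap
    rw [hus, idem]
  constructor
  · unfold mMap
    rw [hiu, key]
  · -- u (t g) = m̄(g,g)
    have hut : u (tMap s mbar g) = mbar g g := by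
      apply ax3 (huD _) ⟨g, rfl⟩
      rw [hus]; rfl
    unfold mMap iMap
    rw [hut]
    have hse : s g = s (u (s g)) := (hus (s g)).symm
    calc mbar (mbar g g) (mbar (u (s g)) g)
        = mbar g (u (s g)) := ax2 g (u (s g)) g hse hse.symm
      _ = g := key g
end

section
/- Under the stated hypotheses on (G, M, s, m̄), the multiplication m is associative: m(g, m(h,k)) = m(m(g,h), k) for all g, h, k ∈ G with s(g) = t(h) and s(h) = t(k). -/
/-- the multiplication `m` is associative: `m(g, m(h,k)) = m(m(g,h), k)` whenever `s g = t h` and `s h = t k`. -/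
theorem mul_assoc_of_division
    {G M : Type*} (s : G → M) (mbar : G → G → G) (u : M → G)
    (hs : Function.Surjective s)
    (hm : ∀ a : G, ∃ g h : G, s g = s h ∧ mbar g h = a)
    (ax1 : ∀ g h : G, s g = s h → s (mbar g h) = s (mbar h h))
    (ax2 : ∀ g h k : G, s g = s h → s h = s k → mbar (mbar g k) (mbar h k) = mbar g h)
    (ax3 : Set.InjOn s {a : G | ∃ g : G, a = mbar g g})
    (huD : ∀ x : M, ∃ g : G, u x = mbar g g)
    (hus : ∀ x : M, s (u x) = x) :
    ∀ g h k : G, s g = tMap s mbar h → s h = tMap s mbar k →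
      mMap s mbar u g (mMap s mbar u h k) = mMap s mbar u (mMap s mbar u g h) k := by
  have L0 : ∀ q : G, u (s (mbar q q)) = mbar q q := by
    intro q
    exact ax3 (huD _) ⟨q, rfl⟩ (hus _)
  have L1 : ∀ x : G, mbar x (u (s x)) = x := by
    intro x
    obtain ⟨p, q, hpq, rfl⟩ := hm x
    rw [ax1 p q hpq, L0]
    exact ax2 p q q hpq rfl
  have L2 : ∀ a b : G, s a = s b → iMap s mbar u (mbar a b) = mbar b a := by
    intro a b hab
    unfold iMap
    rw [ax1 a b hab, L0]
    exact ax2 b a b hab.symm hab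
  have L3 : ∀ x : G, s (iMap s mbar u x) = s (mbar x x) := by
    intro x
    exact ax1 (u (s x)) x (hus _)
  intro g h k hg hk
  unfold mMap tMap at *
  set c := iMap s mbar u k with hc
  have hsc : s c = s h := (L3 k).trans hk.symm
  rw [L2 h c hsc.symm]
  have key : mbar (mbar c h) (iMap s mbar u h) = c := by
    unfold iMap
    rw [ax2 c (u (s h)) h (by rw [hus]; exact hsc) (hus _), ← hsc]
    exact L1 c
  have hsch : s (mbar c h) = s (mbar h h) := ax1 c h hsc
  have main := ax2 g (mbar c h) (iMap s mbar u h)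
    (hg.trans hsch.symm) (hsch.trans (L3 h).symm)
  rw [key] at main
  exact main.symm
end

section
/- (Reconstruction of a groupoid from source and division.) Suppose G and M are sets, s : G → M is a surjective map, and m̄ assigns to each pair (g,h) with s(g) = s(h) an element m̄(g,h) ∈ G, with every element of G of the form m̄(g,h), satisfying axioms (i), (ii), (iii). Then, with t, u, i, m defined as above, (G, M, s, t, m, u, i) is a set-theoretic groupoid over M (all groupoid axioms hold), and its division map coincides with m̄, i.e. m(g, i(h)) = m̄(g,h) for all g, h with s(g) = s(h). -/
/-- with `t, u, i, m` defined from `(s, m̄)`, all the set-theoretic groupoid axioms hold, and the division map of the resulting groupoid coincides with `m̄`. -/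
theorem reconstruction_of_groupoid_from_source_and_division
    {G M : Type*} (s : G → M) (mbar : G → G → G) (u : M → G)
    (hs : Function.Surjective s)
    (hm : ∀ a : G, ∃ g h : G, s g = s h ∧ mbar g h = a)
    (ax1 : ∀ g h : G, s g = s h → s (mbar g h) = s (mbar h h))
    (ax2 : ∀ g h k : G, s g = s h → s h = s k → mbar (mbar g k) (mbar h k) = mbar g h)
    (ax3 : Set.InjOn s {a : G | ∃ g : G, a = mbar g g})
    (huD : ∀ x : M, ∃ g : G, u x = mbar g g)
    (hus : ∀ x : M, s (u x) = x) :
    (∀ g h : G, s g = tMap s mbar h → s (mMap s mbar u g h) = s h) ∧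
    (∀ g h : G, s g = tMap s mbar h →
      tMap s mbar (mMap s mbar u g h) = tMap s mbar g) ∧
    (∀ g h k : G, s g = tMap s mbar h → s h = tMap s mbar k →
      mMap s mbar u (mMap s mbar u g h) k = mMap s mbar u g (mMap s mbar u h k)) ∧
    (∀ x : M, s (u x) = x) ∧
    (∀ x : M, tMap s mbar (u x) = x) ∧
    (∀ g : G, mMap s mbar u g (u (s g)) = g) ∧
    (∀ g : G, mMap s mbar u (u (tMap s mbar g)) g = g) ∧
    (∀ g : G, s (iMap s mbar u g) = tMap s mbar g) ∧
    (∀ g : G, tMap s mbar (iMap s mbar u g) = s g) ∧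
    (∀ g : G, mMap s mbar u (iMap s mbar u g) g = u (s g)) ∧
    (∀ g : G, mMap s mbar u g (iMap s mbar u g) = u (tMap s mbar g)) ∧
    (∀ g h : G, s g = s h → mMap s mbar u g (iMap s mbar u h) = mbar g h) := by
  -- basic lemmas
  have hdd : ∀ g : G, mbar (mbar g g) (mbar g g) = mbar g g := fun g => ax2 g g g rfl rfl
  have huu : ∀ x : M, mbar (u x) (u x) = u x := by
    intro x; obtain ⟨k, hk⟩ := huD x; rw [hk]; exact hdd k
  have htu : ∀ x : M, tMap s mbar (u x) = x := by
    intro x; simp only [tMap]; rw [huu, hus]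
  have hgg : ∀ g : G, mbar g g = u (tMap s mbar g) := by
    intro g
    obtain ⟨k, hk⟩ := huD (tMap s mbar g)
    refine ax3 ⟨g, rfl⟩ ⟨k, by rw [← hk]⟩ ?_
    rw [hus]; rfl
  have hru : ∀ a : G, mbar a (u (s a)) = a := by
    intro a
    obtain ⟨g, h, hgh, rfl⟩ := hm a
    have h1 := ax2 g h h hgh rfl
    rw [ax1 g h hgh]
    have h2 : u (s (mbar h h)) = mbar h h := (hgg h).symm
    rw [h2]; exact h1
  have hsi : ∀ g : G, s (iMap s mbar u g) = tMap s mbar g := by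
    intro g; simp only [iMap, tMap]; exact ax1 (u (s g)) g (hus (s g))
  have hii_self : ∀ g : G, mbar (iMap s mbar u g) (iMap s mbar u g) = u (s g) := by
    intro g; simp only [iMap]
    rw [ax2 (u (s g)) (u (s g)) g rfl (hus (s g)), huu]
  have hti : ∀ g : G, tMap s mbar (iMap s mbar u g) = s g := by
    intro g; simp only [tMap]; rw [hii_self, hus]
  have hlu : ∀ g : G, mMap s mbar u (u (tMap s mbar g)) g = g := by
    intro g
    simp only [mMap, iMap]
    rw [← hgg g, ax2 g (u (s g)) g (hus (s g)).symm (hus (s g)), hru]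
  have hii : ∀ g : G, iMap s mbar u (iMap s mbar u g) = g := by
    intro g
    have h1 := hlu g
    simp only [mMap] at h1
    show mbar (u (s (iMap s mbar u g))) (iMap s mbar u g) = g
    rw [hsi g]; exact h1
  have hdiv : ∀ g h : G, s g = s h → mMap s mbar u g (iMap s mbar u h) = mbar g h := by
    intro g h _
    show mbar g (iMap s mbar u (iMap s mbar u h)) = mbar g h
    rw [hii]
  have hsm : ∀ g h : G, s g = tMap s mbar h → s (mMap s mbar u g h) = s h := by
    intro g h hgh
    show s (mbar g (iMap s mbar u h)) = s h
    rw [ax1 g (iMap s mbar u h) (hgh.trans (hsi h).symm), hii_self, hus]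
  have htm : ∀ g h : G, s g = tMap s mbar h →
      tMap s mbar (mMap s mbar u g h) = tMap s mbar g := by
    intro g h hgh
    show s (mbar (mbar g (iMap s mbar u h)) (mbar g (iMap s mbar u h))) = s (mbar g g)
    rw [ax2 g g (iMap s mbar u h) rfl (hgh.trans (hsi h).symm)]
  have hiu : ∀ x : M, iMap s mbar u (u x) = u x := by
    intro x; show mbar (u (s (u x))) (u x) = u x
    rw [hus, huu]
  have hrun : ∀ g : G, mMap s mbar u g (u (s g)) = g := by
    intro g; show mbar g (iMap s mbar u (u (s g))) = g
    rw [hiu, hru]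
  have hinvl : ∀ g : G, mMap s mbar u (iMap s mbar u g) g = u (s g) := fun g => hii_self g
  have hinvr : ∀ g : G, mMap s mbar u g (iMap s mbar u g) = u (tMap s mbar g) := by
    intro g; show mbar g (iMap s mbar u (iMap s mbar u g)) = u (tMap s mbar g)
    rw [hii, hgg]
  have hK : ∀ g h : G, s g = tMap s mbar h → mbar (mMap s mbar u g h) h = g := by
    intro g h hgh
    have h2 := ax2 g (u (tMap s mbar h)) (iMap s mbar u h)
      (hgh.trans (hus _).symm) ((hus _).trans (hsi h).symm)
    have h3 : mbar (u (tMap s mbar h)) (iMap s mbar u h) = h := hlu h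
    rw [h3] at h2
    show mbar (mbar g (iMap s mbar u h)) h = g
    rw [h2, ← hgh, hru]
  have hK' : ∀ a b : G, s a = s b → mMap s mbar u (mbar a b) b = a := by
    intro a b hab
    have h2 := ax2 a (u (s b)) b (hab.trans (hus _).symm) (hus _)
    show mbar (mbar a b) (iMap s mbar u b) = a
    show mbar (mbar a b) (mbar (u (s b)) b) = a
    rw [h2, ← hab, hru]
  have hw : ∀ h k : G, s h = tMap s mbar k → mbar k (mMap s mbar u h k) = iMap s mbar u h := by
    intro h k hhk
    have h2 := ax2 (u (tMap s mbar k)) h (iMap s mbar u k)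
      ((hus _).trans hhk.symm) (hhk.trans (hsi k).symm)
    have h3 : mbar (u (tMap s mbar k)) (iMap s mbar u k) = k := hlu k
    rw [h3] at h2
    show mbar k (mbar h (iMap s mbar u k)) = iMap s mbar u h
    rw [h2, ← hhk]
    rfl
  have hassoc : ∀ g h k : G, s g = tMap s mbar h → s h = tMap s mbar k →
      mMap s mbar u (mMap s mbar u g h) k = mMap s mbar u g (mMap s mbar u h k) := by
    intro g h k hgh hhk
    have hsmgh : s (mMap s mbar u g h) = tMap s mbar k := (hsm g h hgh).trans hhk
    have hB : s g = tMap s mbar (mMap s mbar u h k) := hgh.trans (htm h k hhk).symm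
    have hk1 : mbar (iMap s mbar u h) (iMap s mbar u (mMap s mbar u h k)) = k := by
      have e1 : mMap s mbar u (mbar k (mMap s mbar u h k)) (mMap s mbar u h k) = k :=
        hK' k (mMap s mbar u h k) (hsm h k hhk).symm
      rw [hw h k hhk] at e1
      exact e1
    have h2 := ax2 g (iMap s mbar u h) (iMap s mbar u (mMap s mbar u h k))
      (hgh.trans (hsi h).symm)
      ((hsi h).trans (((hsi _).trans (htm h k hhk)).symm))
    rw [hk1] at h2
    -- h2 : mbar (mbar g (iMap (mMap h k))) k = mbar g (iMap h)
    have hBk : mbar (mMap s mbar u g (mMap s mbar u h k)) k = mMap s mbar u g h := h2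
    have sA : s (mMap s mbar u (mMap s mbar u g h) k) = s k := hsm _ k hsmgh
    have sB : s (mMap s mbar u g (mMap s mbar u h k)) = s k :=
      (hsm g _ hB).trans (hsm h k hhk)
    calc mMap s mbar u (mMap s mbar u g h) k
        = mMap s mbar u (mbar (mMap s mbar u (mMap s mbar u g h) k) k) k :=
          (hK' _ k sA).symm
      _ = mMap s mbar u (mbar (mMap s mbar u g (mMap s mbar u h k)) k) k := by
          rw [hK _ k hsmgh, hBk]
      _ = mMap s mbar u g (mMap s mbar u h k) := hK' _ k sB
  exact ⟨hsm, htm, hassoc, hus, htu, hrun, hlu, hsi, hti, hinvl, hinvr, hdiv⟩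
end

section
/- (Characterization of groupoid morphisms via source and division.) Let G be a set-theoretic groupoid over M and H a set-theoretic groupoid over N, and let F : G → H and f : M → N be maps. Then (F, f) is a morphism of groupoids — i.e. s(F(g)) = f(s(g)), t(F(g)) = f(t(g)), F(u(x)) = u(f(x)), F(i(g)) = i(F(g)), and F(m(g,h)) = m(F(g), F(h)) whenever s(g) = t(h) — if and only if s(F(g)) = f(s(g)) for all g ∈ G and F(m̄(g,h)) = m̄(F(g), F(h)) for all g, h ∈ G with s(g) = s(h). -/
/-- A set-theoretic groupoid with arrows `G` and objects `M`.  The multiplication is encoded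
as a total map `mul : G → G → G`, but all axioms involving it are only required on
composable pairs, i.e. pairs `(g, h)` with `s g = t h`. -/
structure SetGroupoid (G M : Type*) where
  s : G → M
  t : G → M
  mul : G → G → G
  unit : M → G
  inv : G → G
  s_mul : ∀ g h, s g = t h → s (mul g h) = s h
  t_mul : ∀ g h, s g = t h → t (mul g h) = t g
  mul_assoc : ∀ g h k, s g = t h → s h = t k → mul (mul g h) k = mul g (mul h k)
  s_unit : ∀ x, s (unit x) = x
  t_unit : ∀ x, t (unit x) = x
  mul_unit : ∀ g, mul g (unit (s g)) = g
  unit_mul : ∀ g, mul (unit (t g)) g = g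
  s_inv : ∀ g, s (inv g) = t g
  t_inv : ∀ g, t (inv g) = s g
  inv_mul : ∀ g, mul (inv g) g = unit (s g)
  mul_inv : ∀ g, mul g (inv g) = unit (t g)

/-- Inversion in a set-theoretic groupoid is involutive. -/
theorem SetGroupoid.inv_inv {G M : Type*} (𝒢 : SetGroupoid G M) (h : G) :
    𝒢.inv (𝒢.inv h) = h := by
  have h1 : 𝒢.mul (𝒢.inv (𝒢.inv h)) (𝒢.inv h) = 𝒢.unit (𝒢.t h) := by
    rw [𝒢.inv_mul (𝒢.inv h), 𝒢.s_inv]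
  have h2 : 𝒢.mul (𝒢.mul (𝒢.inv (𝒢.inv h)) (𝒢.inv h)) h
      = 𝒢.mul (𝒢.inv (𝒢.inv h)) (𝒢.mul (𝒢.inv h) h) := by
    apply 𝒢.mul_assoc
    · rw [𝒢.s_inv]
    · rw [𝒢.s_inv]
  rw [h1, 𝒢.unit_mul, 𝒢.inv_mul] at h2
  have h3 : 𝒢.s (𝒢.inv (𝒢.inv h)) = 𝒢.s h := by rw [𝒢.s_inv, 𝒢.t_inv]
  calc 𝒢.inv (𝒢.inv h) = 𝒢.mul (𝒢.inv (𝒢.inv h)) (𝒢.unit (𝒢.s (𝒢.inv (𝒢.inv h)))) :=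
        (𝒢.mul_unit _).symm
    _ = h := by rw [h3, ← h2]

/-- a pair `(F, f)` is a morphism of set-theoretic groupoids if and only if
`F` intertwines the source maps (over `f`) and commutes with the division maps
`m̄(g,h) = m(g, i h)`. -/
theorem morphism_iff_compatible_with_source_and_division
    {G M H N : Type*} (𝒢 : SetGroupoid G M) (ℋ : SetGroupoid H N)
    (F : G → H) (f : M → N) :
    ((∀ g : G, ℋ.s (F g) = f (𝒢.s g)) ∧
     (∀ g : G, ℋ.t (F g) = f (𝒢.t g)) ∧
     (∀ x : M, F (𝒢.unit x) = ℋ.unit (f x)) ∧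
     (∀ g : G, F (𝒢.inv g) = ℋ.inv (F g)) ∧
     (∀ g h : G, 𝒢.s g = 𝒢.t h → F (𝒢.mul g h) = ℋ.mul (F g) (F h)))
    ↔
    ((∀ g : G, ℋ.s (F g) = f (𝒢.s g)) ∧
     (∀ g h : G, 𝒢.s g = 𝒢.s h →
       F (𝒢.mul g (𝒢.inv h)) = ℋ.mul (F g) (ℋ.inv (F h)))) := by
  constructor
  · rintro ⟨hs, ht, hu, hi, hm⟩
    refine ⟨hs, fun g h hgh => ?_⟩
    rw [hm g (𝒢.inv h) (by rw [𝒢.t_inv, hgh]), hi]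
  · rintro ⟨hs, hdiv⟩
    -- units
    have hu : ∀ x : M, F (𝒢.unit x) = ℋ.unit (f x) := by
      intro x
      have e1 : 𝒢.mul (𝒢.unit x) (𝒢.inv (𝒢.unit x)) = 𝒢.unit x := by
        rw [𝒢.mul_inv, 𝒢.t_unit]
      have e2 := hdiv (𝒢.unit x) (𝒢.unit x) rfl
      rw [e1, ℋ.mul_inv] at e2
      have e3 : ℋ.s (F (𝒢.unit x)) = f x := by rw [hs, 𝒢.s_unit]
      have e4 : ℋ.t (F (𝒢.unit x)) = f x := by
        have := congrArg ℋ.s e2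
        rw [ℋ.s_unit, e3] at this
        exact this.symm
      rw [e2, e4]
    -- inverses
    have hi : ∀ g : G, F (𝒢.inv g) = ℋ.inv (F g) := by
      intro g
      have e1 : 𝒢.mul (𝒢.unit (𝒢.s g)) (𝒢.inv g) = 𝒢.inv g := by
        have := 𝒢.unit_mul (𝒢.inv g)
        rwa [𝒢.t_inv] at this
      have e2 := hdiv (𝒢.unit (𝒢.s g)) g (by rw [𝒢.s_unit])
      rw [e1, hu] at e2
      have e3 : ℋ.mul (ℋ.unit (f (𝒢.s g))) (ℋ.inv (F g)) = ℋ.inv (F g) := by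
        have := ℋ.unit_mul (ℋ.inv (F g))
        rwa [ℋ.t_inv, hs] at this
      rw [e3] at e2
      exact e2
    -- target
    have ht : ∀ g : G, ℋ.t (F g) = f (𝒢.t g) := by
      intro g
      have := hs (𝒢.inv g)
      rw [hi, ℋ.s_inv, 𝒢.s_inv] at this
      exact this
    refine ⟨hs, ht, hu, hi, fun g h hgh => ?_⟩
    have e1 := hdiv g (𝒢.inv h) (by rw [𝒢.s_inv, hgh])
    rw [𝒢.inv_inv, hi, ℋ.inv_inv] at e1
    exact e1
end
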